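/- arXiv:1111.5561 — 3 statements merged into one kernel-verified Lean document; each statement's English description precedes it below -/
import Mathlib

section
/- Let f be a homeomorphism of the torus T² homotopic to a Dehn twist, with lift f̂ to the vertical cylinder A. The set ω(B_S⁻) = ∩_{n≥0} closure(∪_{i≥n} f̂ⁱ(B_S⁻)) is closed, f̂-invariant (f̂(ω(B_S⁻)) = ω(B_S⁻)), and every connected component of ω(B_S⁻) is unbounded. -/
noncomputable section

open MeasureTheory

abbrev Torus := AddCircle (1 : ℝ) × AddCircle (1 : ℝ)
abbrev Cyl := AddCircle (1 : ℝ) × ℝ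

/-- The covering map from the plane to the vertical cylinder. -/
def projCyl (z : ℝ × ℝ) : Cyl := ((z.1 : AddCircle (1 : ℝ)), z.2)

/-- The covering map from the plane to the torus. -/
def projTorus (z : ℝ × ℝ) : Torus := ((z.1 : AddCircle (1 : ℝ)), (z.2 : AddCircle (1 : ℝ)))

/-- A lift to the plane of a torus homeomorphism homotopic to a Dehn twist:
a homeomorphism of the plane commuting with integer horizontal translations and
satisfying the Dehn-twist relation for vertical translations, with twist
coefficient `k > 0`. -/
structure DehnLift where
  F : (ℝ × ℝ) ≃ₜ (ℝ × ℝ)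
  k : ℤ
  k_pos : 0 < k
  horiz : ∀ x y : ℝ, F (x + 1, y) = F (x, y) + (1, 0)
  vert : ∀ x y : ℝ, F (x, y + 1) = F (x, y) + ((k : ℝ), 1)

/-- The vertical rotation set of a cylinder map:
`ρ_V(f̂) = ∩_{i≥1} closure( ∪_{n≥i} { (p₂(f̂ⁿ(ẑ)) − p₂(ẑ))/n : ẑ ∈ A } )`. -/
def rotSet (fhat : Cyl → Cyl) : Set ℝ :=
  ⋂ i : ℕ, closure (⋃ n : ℕ, ⋃ _ : i + 1 ≤ n,
    {r : ℝ | ∃ z : Cyl, r = ((fhat^[n] z).2 - z.2) / n})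

/-- A subset of the cylinder is bounded iff its second-coordinate projection is
a bounded subset of `ℝ`. -/
def VBounded (S : Set Cyl) : Prop := ∃ M : ℝ, ∀ z ∈ S, |z.2| ≤ M

/-- `B⁻ = {ẑ : f̂ⁿ(ẑ) ∈ H⁻ for all n ≥ 0}` where `H⁻ = (ℝ/ℤ)×(−∞,0]`. -/
def Bminus (fhat : Cyl → Cyl) : Set Cyl := {z | ∀ n : ℕ, (fhat^[n] z).2 ≤ 0}

/-- `B⁺ = {ẑ : f̂ⁿ(ẑ) ∈ H⁺ for all n ≥ 0}` where `H⁺ = (ℝ/ℤ)×[0,∞)`. -/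
def Bplus (fhat : Cyl → Cyl) : Set Cyl := {z | ∀ n : ℕ, 0 ≤ (fhat^[n] z).2}

/-- `B_S⁻`: the union of the unbounded connected components of `B⁻`. -/
def BS (fhat : Cyl → Cyl) : Set Cyl :=
  {z | z ∈ Bminus fhat ∧ ¬ VBounded (connectedComponentIn (Bminus fhat) z)}

/-- `B_N⁺`: the union of the unbounded connected components of `B⁺`. -/
def BN (fhat : Cyl → Cyl) : Set Cyl :=
  {z | z ∈ Bplus fhat ∧ ¬ VBounded (connectedComponentIn (Bplus fhat) z)}

/-- The ω-limit set `ω(S) = ∩_{n≥0} closure(∪_{i≥n} f̂ⁱ(S))`. -/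
def omegaSet (fhat : Cyl → Cyl) (S : Set Cyl) : Set Cyl :=
  ⋂ n : ℕ, closure (⋃ i : ℕ, ⋃ _ : n ≤ i, fhat^[i] '' S)

/-!
The lift commutes with integer horizontal translations, so `fhat` is a homeomorphism of the
cylinder, and the vertical displacement `(L.F u).2 - u.2` is `ℤ²`-periodic, hence bounded. Bounded
displacement keeps unbounded sets unbounded under `fhat`, so `fhat` maps `B_S⁻` into itself and
`ω(B_S⁻) = ⋂ₙ closure (fhatⁿ B_S⁻)` is a decreasing intersection; closedness and invariance follow.

If the component of `z` in `ω` stayed above height `-m`, then in the compact set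
`ω ∩ {-m ≤ y ≤ 0}` it could be cut off from the level `y = -m` by a clopen set, giving disjoint open
sets `U ∋ z` and `V ∪ {y < -m}` covering `ω`. By compactness they already cover some
`closure (fhatᴺ B_S⁻)`, but a point of `fhatᴺ B_S⁻` in `U` lies on a connected subset of
`fhatᴺ B_S⁻` reaching below `-m`, which would have to jump between them.
-/

open Set Function Topology

lemma exists_isClopen_mem_disjoint_of_disjoint_connectedComponent {X : Type*}
    [TopologicalSpace X] [CompactSpace X] [T2Space X] {x : X} {F : Set X} (hF : IsClosed F)
    (h : Disjoint (connectedComponent x) F) : ∃ s, IsClopen s ∧ x ∈ s ∧ Disjoint s F := by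
  rw [connectedComponent_eq_iInter_isClopen] at h
  obtain ⟨t, ht⟩ := hF.isCompact.elim_finite_subfamily_closed
    (fun s : {s : Set X // IsClopen s ∧ x ∈ s} => (s : Set X)) (fun s => s.2.1.isClosed)
    (disjoint_iff_inter_eq_empty.mp h.symm)
  refine ⟨⋂ s ∈ t, (s : Set X), isClopen_biInter_finset fun s _ => s.2.1,
    mem_iInter₂.mpr fun s _ => s.2.2, ?_⟩
  rw [disjoint_iff_inter_eq_empty, inter_comm, ht]

lemma IsCompact.exists_isOpen_separation_of_disjoint_connectedComponentIn {X : Type*}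
    [TopologicalSpace X] [T2Space X] {K F : Set X} (hK : IsCompact K) (hF : IsClosed F) {x : X}
    (hx : x ∈ K) (h : Disjoint (connectedComponentIn K x) F) :
    ∃ U V, IsOpen U ∧ IsOpen V ∧ Disjoint U V ∧ K ⊆ U ∪ V ∧ x ∈ U ∧ Disjoint U F := by
  have : CompactSpace K := isCompact_iff_compactSpace.mp hK
  rw [connectedComponentIn_eq_image hx] at h
  obtain ⟨s, hs, hxs, hsF⟩ := exists_isClopen_mem_disjoint_of_disjoint_connectedComponent
    (hF.preimage continuous_subtype_val) ((h.preimage _).mono_left (subset_preimage_image _ _))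
  obtain ⟨U, V, hU, hV, hsU, hsV, hUV⟩ := SeparatedNhds.of_isCompact_isCompact
    (hs.isClosed.isCompact.image continuous_subtype_val)
    (hs.compl.isClosed.isCompact.image continuous_subtype_val)
    ((disjoint_image_iff Subtype.val_injective).mpr disjoint_compl_right)
  have hsUF : Subtype.val '' s ⊆ U \ F := by
    rintro _ ⟨p, hps, rfl⟩
    exact ⟨hsU (mem_image_of_mem _ hps), disjoint_left.mp hsF hps⟩
  refine ⟨U \ F, V, hU.sdiff hF, hV, hUV.mono_left sdiff_subset, fun p hp => ?_,
    hsUF (mem_image_of_mem _ hxs), disjoint_sdiff_left⟩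
  by_cases hps : (⟨p, hp⟩ : K) ∈ s
  · exact Or.inl (hsUF (mem_image_of_mem _ hps))
  · exact Or.inr (hsV ⟨⟨p, hp⟩, hps, rfl⟩)

namespace DehnLift

variable (L : DehnLift)

def horizAddConstMap : AddConstMap (ℝ × ℝ) (ℝ × ℝ) (1, 0) (1, 0) where
  toFun := L.F
  map_add_const' u := by
    rw [show u + (1, 0) = (u.1 + 1, u.2) by ext <;> simp]
    exact L.horiz u.1 u.2

def vertAddConstMap : AddConstMap (ℝ × ℝ) (ℝ × ℝ) (0, 1) ((L.k : ℝ), 1) where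
  toFun := L.F
  map_add_const' u := by
    rw [show u + (0, 1) = (u.1, u.2 + 1) by ext <;> simp]
    exact L.vert u.1 u.2

lemma F_add_intCast_fst (u : ℝ × ℝ) (n : ℤ) :
    L.F (u + ((n : ℝ), 0)) = L.F u + ((n : ℝ), 0) := by
  have h := AddConstMapClass.map_add_zsmul L.horizAddConstMap u n
  simp only [Prod.smul_mk, zsmul_eq_mul, mul_one, mul_zero] at h
  exact h

lemma snd_F_add_intCast_snd (u : ℝ × ℝ) (n : ℤ) :
    (L.F (u + (0, (n : ℝ)))).2 = (L.F u).2 + n := by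
  have h := congrArg Prod.snd (AddConstMapClass.map_add_zsmul L.vertAddConstMap u n)
  simp only [Prod.snd_add, Prod.smul_mk, zsmul_eq_mul, mul_one, mul_zero] at h
  exact h

lemma snd_F_sub_snd_add_intCast (u : ℝ × ℝ) (m n : ℤ) :
    (L.F (u + ((m : ℝ), (n : ℝ)))).2 - (u.2 + n) = (L.F u).2 - u.2 := by
  have hsplit : u + ((m : ℝ), (n : ℝ)) = u + ((m : ℝ), 0) + (0, (n : ℝ)) := by
    ext <;> simp
  rw [hsplit, snd_F_add_intCast_snd, F_add_intCast_fst, Prod.snd_add, add_zero]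
  ring

lemma exists_abs_snd_F_sub_le : ∃ C, ∀ u : ℝ × ℝ, |(L.F u).2 - u.2| ≤ C := by
  have hcont : Continuous fun u : ℝ × ℝ => (L.F u).2 - u.2 :=
    (continuous_snd.comp L.F.continuous).sub continuous_snd
  obtain ⟨C, hC⟩ := (isCompact_Icc (a := ((0 : ℝ), (0 : ℝ))) (b := (1, 1))
    ).exists_bound_of_continuousOn hcont.continuousOn
  refine ⟨C, fun u => ?_⟩
  set v : ℝ × ℝ := (Int.fract u.1, Int.fract u.2)
  have hv : v ∈ Icc ((0 : ℝ), (0 : ℝ)) (1, 1) :=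
    ⟨⟨Int.fract_nonneg _, Int.fract_nonneg _⟩, ⟨(Int.fract_lt_one _).le, (Int.fract_lt_one _).le⟩⟩
  have hu : u = v + ((⌊u.1⌋ : ℝ), (⌊u.2⌋ : ℝ)) := by
    ext <;> simp [v, Int.fract_add_floor]
  have hperiodic := L.snd_F_sub_snd_add_intCast v ⌊u.1⌋ ⌊u.2⌋
  rw [← hu, show v.2 + ⌊u.2⌋ = u.2 from Int.fract_add_floor u.2] at hperiodic
  simpa [hperiodic] using hC v hv

end DehnLift

@[simp]
lemma snd_projCyl (u : ℝ × ℝ) : (projCyl u).2 = u.2 := rfl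

lemma continuous_projCyl : Continuous projCyl :=
  (AddCircle.continuous_mk' 1 |>.comp continuous_fst).prodMk continuous_snd

lemma isOpenMap_projCyl : IsOpenMap projCyl :=
  QuotientAddGroup.isOpenMap_coe.prodMap IsOpenMap.id

lemma surjective_projCyl : Surjective projCyl :=
  (QuotientAddGroup.mk_surjective).prodMap surjective_id

lemma projCyl_add_intCast (u : ℝ × ℝ) (n : ℤ) : projCyl (u + ((n : ℝ), 0)) = projCyl u := by
  simp [projCyl]

lemma exists_eq_add_intCast_of_projCyl_eq {u v : ℝ × ℝ} (h : projCyl u = projCyl v) :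
    ∃ n : ℤ, v = u + ((n : ℝ), 0) := by
  obtain ⟨h1, h2⟩ := Prod.ext_iff.mp h
  have hdiff : ((v.1 - u.1 : ℝ) : AddCircle (1 : ℝ)) = 0 := by
    rw [AddCircle.coe_sub, sub_eq_zero]
    exact h1.symm
  obtain ⟨n, hn⟩ := (AddCircle.coe_eq_zero_iff 1).mp hdiff
  refine ⟨n, Prod.ext ?_ (by simpa using h2.symm)⟩
  simp only [zsmul_one] at hn
  simp [hn]

section Lift

variable {L : DehnLift} {fhat : Cyl → Cyl}
  (hfhat : ∀ z : ℝ × ℝ, projCyl (L.F z) = fhat (projCyl z))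
include hfhat

lemma continuous_of_lift : Continuous fhat := by
  rw [isOpenMap_projCyl.isQuotientMap continuous_projCyl surjective_projCyl |>.continuous_iff]
  simpa only [comp_def, ← hfhat] using continuous_projCyl.comp L.F.continuous

lemma isOpenMap_of_lift : IsOpenMap fhat := by
  intro U hU
  have hcomm : fhat ∘ projCyl = projCyl ∘ L.F := funext fun u => (hfhat u).symm
  rw [← image_preimage_eq U surjective_projCyl, ← image_comp, hcomm, image_comp]
  exact isOpenMap_projCyl _ (L.F.isOpenMap _ (hU.preimage continuous_projCyl))

lemma injective_of_lift : Injective fhat := by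
  intro p q hpq
  obtain ⟨u, rfl⟩ := surjective_projCyl p
  obtain ⟨v, rfl⟩ := surjective_projCyl q
  rw [← hfhat, ← hfhat] at hpq
  obtain ⟨n, hn⟩ := exists_eq_add_intCast_of_projCyl_eq hpq
  rw [← L.F_add_intCast_fst] at hn
  rw [L.F.injective hn, projCyl_add_intCast]

lemma surjective_of_lift : Surjective fhat := by
  intro p
  obtain ⟨u, rfl⟩ := surjective_projCyl p
  refine ⟨projCyl (L.F.symm u), ?_⟩
  rw [← hfhat, Homeomorph.apply_symm_apply]

lemma isHomeomorph_of_lift : IsHomeomorph fhat :=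
  ⟨continuous_of_lift hfhat, isOpenMap_of_lift hfhat,
    injective_of_lift hfhat, surjective_of_lift hfhat⟩

lemma exists_abs_snd_sub_le_of_lift : ∃ C, ∀ z : Cyl, |(fhat z).2 - z.2| ≤ C := by
  obtain ⟨C, hC⟩ := L.exists_abs_snd_F_sub_le
  refine ⟨C, fun z => ?_⟩
  obtain ⟨u, rfl⟩ := surjective_projCyl z
  simpa [← hfhat] using hC u

end Lift

lemma VBounded.mono {S T : Set Cyl} (h : S ⊆ T) (hT : VBounded T) : VBounded S :=
  let ⟨M, hM⟩ := hT
  ⟨M, fun z hz => hM z (h hz)⟩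

lemma exists_snd_lt_of_not_vBounded {S : Set Cyl} (hS : ∀ p ∈ S, p.2 ≤ 0) (h : ¬ VBounded S)
    (m : ℝ) : ∃ p ∈ S, p.2 < -m := by
  by_contra! hm
  exact h ⟨m, fun p hp => abs_le.mpr ⟨hm p hp, by linarith [hm p hp, hS p hp]⟩⟩

section BoundedDisplacement

variable {g : Cyl → Cyl} {C : ℝ}

lemma abs_snd_iterate_sub_le (hC : ∀ z, |(g z).2 - z.2| ≤ C) (n : ℕ) (z : Cyl) :
    |(g^[n] z).2 - z.2| ≤ n * C := by
  induction n with
  | zero => simp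
  | succ n ih =>
    rw [iterate_succ_apply', Nat.cast_succ, add_mul, one_mul]
    calc |(g (g^[n] z)).2 - z.2|
        ≤ |(g (g^[n] z)).2 - (g^[n] z).2| + |(g^[n] z).2 - z.2| := abs_sub_le _ _ _
      _ ≤ C + n * C := add_le_add (hC _) ih
      _ = n * C + C := add_comm _ _

lemma VBounded.of_image (hC : ∀ z, |(g z).2 - z.2| ≤ C) {S : Set Cyl} (h : VBounded (g '' S)) :
    VBounded S := by
  obtain ⟨M, hM⟩ := h
  refine ⟨M + C, fun z hz => ?_⟩
  calc |z.2| ≤ |(g z).2| + |(g z).2 - z.2| := by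
        linarith [abs_sub_abs_le_abs_sub z.2 (g z).2, abs_sub_comm z.2 (g z).2]
    _ ≤ M + C := add_le_add (hM _ (mem_image_of_mem g hz)) (hC z)

lemma mapsTo_Bminus : MapsTo g (Bminus g) (Bminus g) := fun z hz n => by
  simpa only [← iterate_succ_apply] using hz (n + 1)

lemma connectedComponentIn_Bminus_subset_BS {z : Cyl} (hz : z ∈ BS g) :
    connectedComponentIn (Bminus g) z ⊆ BS g := fun _ hy =>
  ⟨connectedComponentIn_subset _ _ hy, connectedComponentIn_eq hy ▸ hz.2⟩

variable (hC : ∀ z, |(g z).2 - z.2| ≤ C)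
include hC

lemma mapsTo_BS (hg : Continuous g) : MapsTo g (BS g) (BS g) := by
  rintro z ⟨hzB, hz⟩
  refine ⟨mapsTo_Bminus hzB, fun hbdd => hz (VBounded.of_image hC (hbdd.mono ?_))⟩
  exact (isPreconnected_connectedComponentIn.image _ hg.continuousOn).subset_connectedComponentIn
    (mem_image_of_mem g (mem_connectedComponentIn hzB))
    (mapsTo_Bminus.mono_left (connectedComponentIn_subset _ _)).image_subset

lemma exists_isPreconnected_not_vBounded_of_mem_image_iterate_BS (hg : Continuous g) (n : ℕ)
    {p : Cyl} (hp : p ∈ g^[n] '' BS g) :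
    ∃ D ⊆ g^[n] '' BS g, p ∈ D ∧ IsPreconnected D ∧ ¬ VBounded D := by
  obtain ⟨z, hz, rfl⟩ := hp
  refine ⟨g^[n] '' connectedComponentIn (Bminus g) z,
    image_mono (connectedComponentIn_Bminus_subset_BS hz),
    mem_image_of_mem _ (mem_connectedComponentIn hz.1),
    isPreconnected_connectedComponentIn.image _ (hg.iterate n).continuousOn,
    fun hbdd => hz.2 (VBounded.of_image (abs_snd_iterate_sub_le hC n) hbdd)⟩

end BoundedDisplacement

section OmegaLimit

variable {g : Cyl → Cyl} {S : Set Cyl}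

lemma antitone_image_iterate (h : MapsTo g S S) : Antitone fun n => g^[n] '' S := by
  intro m n hmn
  obtain ⟨k, rfl⟩ := Nat.exists_eq_add_of_le hmn
  simp only [iterate_add, image_comp]
  exact image_mono ((h.iterate k).image_subset)

lemma omegaSet_eq_iInter_closure (h : MapsTo g S S) :
    omegaSet g S = ⋂ n, closure (g^[n] '' S) := by
  refine iInter_congr fun n => congrArg closure ?_
  exact subset_antisymm (iUnion₂_subset fun i hi => antitone_image_iterate h hi)
    (subset_iUnion₂ (s := fun i (_ : n ≤ i) => g^[i] '' S) n le_rfl)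

lemma isClosed_omegaSet : IsClosed (omegaSet g S) :=
  isClosed_iInter fun _ => isClosed_closure

lemma IsHomeomorph.image_omegaSet (hg : IsHomeomorph g) (h : MapsTo g S S) :
    g '' omegaSet g S = omegaSet g S := by
  have hanti : Antitone fun n => closure (g^[n] '' S) :=
    fun m n hmn => closure_mono (antitone_image_iterate h hmn)
  rw [omegaSet_eq_iInter_closure h, image_iInter hg.bijective, ← hanti.iInter_nat_add 1]
  refine iInter_congr fun n => ?_
  rw [hg.image_closure, ← image_comp, ← iterate_succ']

end OmegaLimit

lemma isCompact_snd_preimage_Icc (a b : ℝ) : IsCompact (Prod.snd ⁻¹' Icc a b : Set Cyl) := by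
  rw [← univ_prod]
  exact isCompact_univ.prod isCompact_Icc

section LowerHalf

variable {A : ℕ → Set Cyl} (hA0 : ∀ n, ∀ p ∈ A n, p.2 ≤ 0)

include hA0 in
lemma snd_nonpos_of_mem_closure {n : ℕ} {p : Cyl} (hp : p ∈ closure (A n)) : p.2 ≤ 0 :=
  closure_minimal (hA0 n) (isClosed_le continuous_snd continuous_const) hp

variable (hA : Antitone A)
include hA hA0

lemma exists_closure_subset_of_iInter_closure_subset {O : Set Cyl} (hO : IsOpen O) {m : ℝ}
    (hm : {p : Cyl | p.2 < -m} ⊆ O) (hω : ⋂ n, closure (A n) ⊆ O) : ∃ N, closure (A N) ⊆ O := by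
  obtain ⟨N, hN⟩ := exists_subset_nhds_of_isCompact
    (V := fun n => closure (A n) ∩ Prod.snd ⁻¹' Icc (-m) 0)
    (Antitone.directed_ge fun _ _ h => inter_subset_inter_left _ (closure_mono (hA h)))
    (fun _ => (isCompact_snd_preimage_Icc _ _).inter_left isClosed_closure)
    (fun p hp => hO.mem_nhds (hω (mem_iInter.mpr fun n => (mem_iInter.mp hp n).1)))
  refine ⟨N, fun p hp => ?_⟩
  by_cases hpm : p.2 < -m
  · exact hm hpm
  · exact hN ⟨hp, not_lt.mp hpm, snd_nonpos_of_mem_closure hA0 hp⟩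

lemma not_vBounded_connectedComponentIn_iInter_closure
    (hconn : ∀ n, ∀ p ∈ A n, ∃ D ⊆ A n, p ∈ D ∧ IsPreconnected D ∧ ¬ VBounded D)
    {z : Cyl} (hz : z ∈ ⋂ n, closure (A n)) :
    ¬ VBounded (connectedComponentIn (⋂ n, closure (A n)) z) := by
  set ω := ⋂ n, closure (A n)
  rintro ⟨M, hM⟩
  have hω0 : ∀ p ∈ ω, p.2 ≤ 0 := fun p hp => snd_nonpos_of_mem_closure hA0 (mem_iInter.mp hp 0)
  set K := ω ∩ Prod.snd ⁻¹' Icc (-(M + 1)) 0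
  have hzK : z ∈ K :=
    ⟨hz, by linarith [(abs_le.mp (hM z (mem_connectedComponentIn hz))).1], hω0 z hz⟩
  have hdisj : Disjoint (connectedComponentIn K z) {p : Cyl | p.2 ≤ -(M + 1)} :=
    disjoint_left.mpr fun p hp hpm => by
      linarith [(abs_le.mp (hM p (connectedComponentIn_mono z inter_subset_left hp))).1, hpm.out]
  obtain ⟨U, V, hU, hV, hUV, hKUV, hzU, hUF⟩ :=
    ((isCompact_snd_preimage_Icc _ _).inter_left (isClosed_iInter fun _ => isClosed_closure)
      ).exists_isOpen_separation_of_disjoint_connectedComponentIn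
      (isClosed_le continuous_snd continuous_const) hzK hdisj
  set W := V ∪ {p : Cyl | p.2 < -(M + 1)}
  have hW : IsOpen W := hV.union (isOpen_lt continuous_snd continuous_const)
  have hUW : Disjoint U W := disjoint_union_right.mpr
    ⟨hUV, hUF.mono_right (ofPred_subset_ofPred.mpr fun _ => le_of_lt)⟩
  have hωUW : ω ⊆ U ∪ W := fun p hp => by
    by_cases hpm : p.2 < -(M + 1)
    · exact Or.inr (Or.inr hpm)
    · exact (hKUV ⟨hp, not_lt.mp hpm, hω0 p hp⟩).imp_right Or.inl
  obtain ⟨N, hN⟩ := exists_closure_subset_of_iInter_closure_subset hA0 hA (hU.union hW)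
    (fun p hp => Or.inr (Or.inr hp)) hωUW
  obtain ⟨w, hwU, hwA⟩ := mem_closure_iff.mp (mem_iInter.mp hz N) U hU hzU
  obtain ⟨D, hDA, hwD, hD, hDunb⟩ := hconn N w hwA
  have hDU : D ⊆ U := hD.subset_left_of_subset_union hU hW hUW
    ((hDA.trans subset_closure).trans hN) ⟨w, hwD, hwU⟩
  obtain ⟨p, hpD, hpm⟩ := exists_snd_lt_of_not_vBounded
    (fun p hp => hA0 N p (hDA hp)) hDunb (M + 1)
  exact disjoint_left.mp hUF (hDU hpD) hpm.le

end LowerHalf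

/-- `ω(B_S⁻)` is closed, `f̂`-invariant, and all its connected
components are unbounded. -/
theorem omega_BS_closed_invariant_unbounded_components
    (L : DehnLift) (fhat : Cyl → Cyl)
    (hfhat : ∀ z : ℝ × ℝ, projCyl (L.F z) = fhat (projCyl z)) :
    IsClosed (omegaSet fhat (BS fhat)) ∧
    fhat '' omegaSet fhat (BS fhat) = omegaSet fhat (BS fhat) ∧
    ∀ z ∈ omegaSet fhat (BS fhat),
      ¬ VBounded (connectedComponentIn (omegaSet fhat (BS fhat)) z) := by
  have hf := isHomeomorph_of_lift hfhat
  obtain ⟨C, hC⟩ := exists_abs_snd_sub_le_of_lift hfhat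
  have hBS : MapsTo fhat (BS fhat) (BS fhat) := mapsTo_BS hC hf.continuous
  refine ⟨isClosed_omegaSet, hf.image_omegaSet hBS, ?_⟩
  rw [omegaSet_eq_iInter_closure hBS]
  exact fun z => not_vBounded_connectedComponentIn_iInter_closure
    (fun n => by rintro _ ⟨q, hq, rfl⟩; exact hq.1 n) (antitone_image_iterate hBS)
    (fun n _ => exists_isPreconnected_not_vBounded_of_mem_image_iterate_BS hC hf.continuous n)
end
end

section
/- Let X be a nonempty compact connected metric space and let f : X → X be a minimal homeomorphism (every f-orbit is dense in X). Then for every integer q ≥ 1, the homeomorphism f^q is also minimal. -/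
/-!
Let `M` be a minimal set of `f ^ q` (a minimal nonempty closed `f ^ q`-invariant set, which exists
by Zorn's lemma and compactness). Its images `f ^ i '' M`, `i < q`, are closed, contain the dense
`f`-orbit of any point of `M`, and hence cover `X`. Since `f ^ i` commutes with `f ^ q`, each image
either equals `M` or is disjoint from it, so the complement of `M` is a finite union of closed sets.
Thus `M` is clopen, hence `M = X` by connectedness; as every `f ^ q`-orbit closure contains a
minimal set, every `f ^ q`-orbit is dense.
-/

open Set

namespace Homeomorph

variable {X : Type*} [TopologicalSpace X]

def toPermHom : (X ≃ₜ X) →* Equiv.Perm X where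
  toFun := Homeomorph.toEquiv
  map_one' := rfl
  map_mul' _ _ := rfl

theorem coe_toEquiv_zpow (f : X ≃ₜ X) (n : ℤ) : ⇑(f.toEquiv ^ n) = ⇑(f ^ n) := by
  change ⇑(toPermHom f ^ n) = ⇑(toPermHom (f ^ n))
  rw [map_zpow]

theorem toEquiv_pow (f : X ≃ₜ X) (n : ℕ) : f.toEquiv ^ n = (f ^ n).toEquiv :=
  (map_pow toPermHom f n).symm

end Homeomorph

section MinimalSet

variable {τ X : Type*} [TopologicalSpace X] {ϕ : τ → X → X}

variable (ϕ) in
structure IsNonemptyClosedInvariant (A : Set X) : Prop where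
  nonempty : A.Nonempty
  isClosed : IsClosed A
  isInvariant : IsInvariant ϕ A

theorem IsNonemptyClosedInvariant.exists_minimal_subset [CompactSpace X] {A : Set X}
    (hA : IsNonemptyClosedInvariant ϕ A) :
    ∃ M ⊆ A, Minimal (IsNonemptyClosedInvariant ϕ) M := by
  refine zorn_superset_nonempty {B | IsNonemptyClosedInvariant ϕ B} ?_ A hA
  intro c hc hchain hne
  have : Nonempty c := hne.to_subtype
  refine ⟨⋂₀ c, ⟨?_, isClosed_sInter fun B hB => (hc hB).isClosed, ?_⟩,
    fun B => sInter_subset_of_mem⟩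
  · exact IsCompact.nonempty_sInter_of_directed_nonempty_isCompact_isClosed
      (fun A hA B hB => (hchain.total hA hB).elim (fun hAB => ⟨A, hA, subset_rfl, hAB⟩)
        (fun hBA => ⟨B, hB, hBA, subset_rfl⟩)) (fun B hB => (hc hB).nonempty)
      (fun B hB => (hc hB).isClosed.isCompact) (fun B hB => (hc hB).isClosed)
  · exact fun t x hx => mem_sInter.2 fun B hB => (hc hB).isInvariant t (hx B hB)

theorem IsNonemptyClosedInvariant.image {A : Set X} (hA : IsNonemptyClosedInvariant ϕ A)
    (h : X ≃ₜ X) (hcomm : ∀ t, Function.Commute h (ϕ t)) :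
    IsNonemptyClosedInvariant ϕ (h '' A) where
  nonempty := hA.nonempty.image h
  isClosed := h.isClosedMap A hA.isClosed
  isInvariant := by
    rintro t _ ⟨a, ha, rfl⟩
    exact ⟨ϕ t a, hA.isInvariant t ha, hcomm t a⟩

theorem Minimal.image_eq_of_inter_nonempty {M : Set X}
    (hM : Minimal (IsNonemptyClosedInvariant ϕ) M) (h : X ≃ₜ X)
    (hcomm : ∀ t, Function.Commute h (ϕ t)) (hne : (h '' M ∩ M).Nonempty) : h '' M = M := by
  have hinter : IsNonemptyClosedInvariant ϕ (h '' M ∩ M) :=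
    ⟨hne, (h.isClosedMap M hM.prop.isClosed).inter hM.prop.isClosed,
      fun t => ((hM.prop.image h hcomm).isInvariant t).inter_inter (hM.prop.isInvariant t)⟩
  have hsub : M ⊆ h '' M :=
    calc M = h '' M ∩ M := (hM.eq_of_subset hinter inter_subset_right).symm
      _ ⊆ h '' M := inter_subset_left
  have hcomm_symm : ∀ t, Function.Commute h.symm (ϕ t) := fun t x =>
    h.injective <| by rw [h.apply_symm_apply, hcomm t, h.apply_symm_apply]
  have hpre : h.symm '' M = M := by
    refine hM.eq_of_subset (hM.prop.image h.symm hcomm_symm) ?_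
    calc h.symm '' M ⊆ h.symm '' (h '' M) := image_mono hsub
      _ = M := h.toEquiv.symm_image_image M
  calc h '' M = h '' (h.symm '' M) := by rw [hpre]
    _ = M := h.toEquiv.image_symm_image M

end MinimalSet

section Power

variable {X : Type*} [TopologicalSpace X]

theorem isNonemptyClosedInvariant_closure_range_zpow (g : X ≃ₜ X) (x : X) :
    IsNonemptyClosedInvariant (fun n : ℤ => ⇑(g ^ n))
      (closure (range fun n : ℤ => (g ^ n) x)) where
  nonempty := ⟨x, subset_closure ⟨0, rfl⟩⟩
  isClosed := isClosed_closure
  isInvariant m := by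
    refine MapsTo.closure ?_ (g ^ m).continuous
    rintro _ ⟨n, rfl⟩
    exact ⟨m + n, show (g ^ (m + n)) x = (g ^ m) ((g ^ n) x) by
      rw [zpow_add, Homeomorph.mul_apply]⟩

theorem iUnion_pow_image_eq_univ {f : X ≃ₜ X}
    (hf : ∀ x, Dense (range fun n : ℤ => (f ^ n) x)) {q : ℕ} (hq : 0 < q) {M : Set X}
    (hM : IsNonemptyClosedInvariant (fun n : ℤ => ⇑((f ^ q) ^ n)) M) :
    ⋃ i ∈ Finset.range q, ⇑(f ^ i) '' M = univ := by
  obtain ⟨y, hy⟩ := hM.nonempty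
  have hclosed : IsClosed (⋃ i ∈ Finset.range q, ⇑(f ^ i) '' M) :=
    isClosed_biUnion_finset fun i _ => (f ^ i).isClosedMap M hM.isClosed
  have horbit : (range fun n : ℤ => (f ^ n) y) ⊆ ⋃ i ∈ Finset.range q, ⇑(f ^ i) '' M := by
    rintro _ ⟨n, rfl⟩
    have hrem : 0 ≤ n % q := Int.emod_nonneg n (by omega)
    have hrem_lt : n % q < q := Int.emod_lt_of_pos n (by omega)
    refine mem_biUnion (x := (n % q).toNat) (Finset.mem_range.2 (by omega))
      ⟨((f ^ q) ^ (n / q)) y, hM.isInvariant _ hy, ?_⟩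
    rw [← Homeomorph.mul_apply, ← zpow_natCast, ← zpow_natCast, ← zpow_mul, ← zpow_add,
      Int.toNat_of_nonneg hrem, Int.emod_add_mul_ediv]
  exact univ_subset_iff.1 <| (hf y).closure_eq ▸ closure_minimal horbit hclosed

theorem Minimal.eq_univ_of_pow [CompactSpace X] [PreconnectedSpace X] {f : X ≃ₜ X}
    (hf : ∀ x, Dense (range fun n : ℤ => (f ^ n) x)) {q : ℕ} (hq : 0 < q) {M : Set X}
    (hM : Minimal (IsNonemptyClosedInvariant (fun n : ℤ => ⇑((f ^ q) ^ n))) M) : M = univ := by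
  classical
  have hcomm (i : ℕ) (n : ℤ) : Function.Commute ⇑(f ^ i) ⇑((f ^ q) ^ n) := fun x =>
    DFunLike.congr_fun (((Commute.refl f).pow_pow i q).zpow_right n).eq x
  have hcompl :
    Mᶜ = ⋃ i ∈ (Finset.range q).filter (fun i => ⇑(f ^ i) '' M ≠ M), ⇑(f ^ i) '' M := by
    ext z
    simp only [mem_compl_iff, mem_iUnion, Finset.mem_filter, Finset.mem_range, exists_prop]
    constructor
    · intro hz
      obtain ⟨i, hi, hzi⟩ :=
        mem_iUnion₂.1 (iUnion_pow_image_eq_univ hf hq hM.prop ▸ mem_univ z)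
      exact ⟨i, ⟨Finset.mem_range.1 hi, fun h => hz (h ▸ hzi)⟩, hzi⟩
    · rintro ⟨i, ⟨-, hne⟩, hzi⟩ hz
      exact hne (hM.image_eq_of_inter_nonempty (f ^ i) (hcomm i) ⟨z, hzi, hz⟩)
  have hopen : IsOpen M := by
    rw [← isClosed_compl_iff, hcompl]
    exact isClosed_biUnion_finset fun i _ => (f ^ i).isClosedMap M hM.prop.isClosed
  exact IsClopen.eq_univ ⟨hM.prop.isClosed, hopen⟩ hM.prop.nonempty

theorem dense_range_pow_zpow [CompactSpace X] [PreconnectedSpace X] {f : X ≃ₜ X}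
    (hf : ∀ x, Dense (range fun n : ℤ => (f ^ n) x)) {q : ℕ} (hq : 0 < q) (x : X) :
    Dense (range fun n : ℤ => ((f ^ q) ^ n) x) := by
  obtain ⟨M, hMx, hM⟩ :=
    (isNonemptyClosedInvariant_closure_range_zpow (f ^ q) x).exists_minimal_subset
  rw [dense_iff_closure_eq, ← univ_subset_iff]
  exact hM.eq_univ_of_pow hf hq ▸ hMx

end Power

theorem power_of_minimal_is_minimal_general
    {X : Type*} [MetricSpace X] [CompactSpace X] [ConnectedSpace X]
    (f : X ≃ₜ X)
    (hmin : ∀ x : X, Dense (Set.range fun n : ℤ => (f.toEquiv ^ n) x))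
    (q : ℕ) (hq : 1 ≤ q) :
    ∀ x : X, Dense (Set.range fun n : ℤ => ((f.toEquiv ^ q) ^ n) x) := by
  simp_rw [Homeomorph.coe_toEquiv_zpow] at hmin
  simpa only [Homeomorph.toEquiv_pow, Homeomorph.coe_toEquiv_zpow] using
    dense_range_pow_zpow hmin hq

/-- If `f` is a minimal homeomorphism of a nonempty compact
connected metric space `X` (every full `f`-orbit is dense), then for every
integer `q ≥ 1` the homeomorphism `f^q` is also minimal. -/
theorem power_of_minimal_is_minimal
    {X : Type*} [MetricSpace X] [CompactSpace X] [ConnectedSpace X] [Nonempty X]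
    (f : X ≃ₜ X)
    (hmin : ∀ x : X, Dense (Set.range fun n : ℤ => (f.toEquiv ^ n) x))
    (q : ℕ) (hq : 1 ≤ q) :
    ∀ x : X, Dense (Set.range fun n : ℤ => ((f.toEquiv ^ q) ^ n) x) :=
  power_of_minimal_is_minimal_general f hmin q hq
end

section
/- Let f be a homeomorphism of the torus T² homotopic to a Dehn twist, with lift f̂ to the vertical cylinder A. The vertical rotation set ρ_V(f̂) is a nonempty compact interval of ℝ: there exist real numbers a ≤ b with ρ_V(f̂) = [a, b]. -/
noncomputable section

open MeasureTheory

/-!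
Under the Dehn-twist relation the cylinder lift commutes with the vertical unit translation, so
the `n`-step vertical displacement `z ↦ p₂(f̂ⁿ z) - p₂ z` is periodic in the height, and its
range is already attained on the compact connected band `(ℝ/ℤ) × [0, 1]`: a compact interval
`[lₙ, uₙ]`. The displacement is a cocycle over `f̂`, so `uₙ` is subadditive and `lₙ`
superadditive; by Fekete's lemma `uₙ / n ↓ b` and `lₙ / n ↑ a` with `a ≤ b`. The sets whose
limit superior defines `ρ_V(f̂)` are exactly the intervals `[lₙ / n, uₙ / n] ⊇ [a, b]`, and these
shrink to `[a, b]`.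
-/

open Set Filter Topology Function

theorem Subadditive.apply_le_mul_apply_one {u : ℕ → ℝ} (hu : Subadditive u) {n : ℕ}
    (hn : n ≠ 0) : u n ≤ n * u 1 := by
  obtain ⟨k, rfl⟩ := Nat.exists_eq_succ_of_ne_zero hn
  have h := hu.apply_mul_add_le k 1 1
  rw [mul_one] at h
  push_cast
  linarith

theorem Subadditive.bddBelow_range_div_of_neg_le {u v : ℕ → ℝ} (hv : Subadditive v)
    (h : ∀ n, -v n ≤ u n) : BddBelow (range fun n : ℕ => u n / n) := by
  refine ⟨min 0 (-v 1), forall_mem_range.2 fun n => ?_⟩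
  rcases Nat.eq_zero_or_pos n with rfl | hn
  · simp
  have hn' : (0 : ℝ) < n := Nat.cast_pos.2 hn
  calc min 0 (-v 1) ≤ -v 1 := min_le_right _ _
    _ ≤ u n / n := by
      rw [le_div_iff₀ hn']
      linarith [h n, hv.apply_le_mul_apply_one hn.ne']

theorem exists_tendsto_div_of_subadditive {l u : ℕ → ℝ} (hu : Subadditive u)
    (hl : Subadditive fun n => -l n) (hlu : ∀ n, l n ≤ u n) :
    ∃ a b : ℝ, a ≤ b ∧ Tendsto (fun n : ℕ => l n / n) atTop (𝓝 a) ∧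
      Tendsto (fun n : ℕ => u n / n) atTop (𝓝 b) ∧
      (∀ n ≠ 0, l n / n ≤ a) ∧ ∀ n ≠ 0, b ≤ u n / n := by
  have hu_bdd := hl.bddBelow_range_div_of_neg_le fun n => by simpa using hlu n
  have hl_bdd := hu.bddBelow_range_div_of_neg_le (u := fun n => -l n) fun n => by
    simpa using hlu n
  have hl_tendsto : Tendsto (fun n : ℕ => l n / n) atTop (𝓝 (-hl.lim)) := by
    simpa [neg_div] using (hl.tendsto_lim hl_bdd).neg
  refine ⟨-hl.lim, hu.lim, le_of_tendsto_of_tendsto' hl_tendsto (hu.tendsto_lim hu_bdd)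
    fun n => div_le_div_of_nonneg_right (hlu n) n.cast_nonneg, hl_tendsto,
    hu.tendsto_lim hu_bdd, fun n hn => ?_, fun n hn => hu.lim_le_div hu_bdd hn⟩
  have hlim := hl.lim_le_div hl_bdd hn
  rw [neg_div] at hlim
  linarith

theorem iInter_closure_iUnion_Icc_eq {lo hi : ℕ → ℝ} {a b : ℝ}
    (hlo : Tendsto lo atTop (𝓝 a)) (hhi : Tendsto hi atTop (𝓝 b))
    (hlo_le : ∀ n ≠ 0, lo n ≤ a) (hle_hi : ∀ n ≠ 0, b ≤ hi n) :
    ⋂ i : ℕ, closure (⋃ n : ℕ, ⋃ _ : i + 1 ≤ n, Icc (lo n) (hi n)) = Icc a b := by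
  refine Subset.antisymm (fun x hx => ?_) fun x hx => mem_iInter.2 fun i => subset_closure <|
    mem_iUnion₂.2 ⟨i + 1, le_rfl, hlo_le _ i.succ_ne_zero |>.trans hx.1,
      hx.2.trans <| hle_hi _ i.succ_ne_zero⟩
  have hx_mem : ∀ ε > 0, a - ε ≤ x ∧ x ≤ b + ε := by
    intro ε hε
    obtain ⟨N, hN⟩ := eventually_atTop.1 <|
      (hlo.eventually (eventually_ge_nhds (sub_lt_self a hε))).and
        (hhi.eventually (eventually_le_nhds (lt_add_of_pos_right b hε)))
    refine closure_minimal ?_ isClosed_Icc (mem_iInter.1 hx N)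
    simp only [iUnion_subset_iff]
    exact fun n hn => Icc_subset_Icc (hN n (by omega)).1 (hN n (by omega)).2
  exact ⟨le_of_forall_pos_le_add fun ε hε => by linarith [(hx_mem ε hε).1],
    le_of_forall_pos_le_add fun ε hε => (hx_mem ε hε).2⟩

theorem subadditive_iSup_of_cocycle {X : Type*} [Nonempty X] {f : X → X} {c : ℕ → X → ℝ}
    (hc : ∀ m n x, c (m + n) x = c m (f^[n] x) + c n x) (hb : ∀ n, BddAbove (range (c n))) :
    Subadditive fun n => ⨆ x, c n x := fun m n =>
  ciSup_le fun x => hc m n x ▸ add_le_add (le_ciSup (hb m) _) (le_ciSup (hb n) _)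

theorem subadditive_neg_iInf_of_cocycle {X : Type*} [Nonempty X] {f : X → X} {c : ℕ → X → ℝ}
    (hc : ∀ m n x, c (m + n) x = c m (f^[n] x) + c n x) (hb : ∀ n, BddBelow (range (c n))) :
    Subadditive fun n => -⨅ x, c n x := fun m n => by
  have hsuper : (⨅ x, c m x) + ⨅ x, c n x ≤ ⨅ x, c (m + n) x :=
    le_ciInf fun x => hc m n x ▸ add_le_add (ciInf_le (hb m) _) (ciInf_le (hb n) _)
  linarith

theorem isOpenQuotientMap_projCyl : IsOpenQuotientMap projCyl :=
  QuotientAddGroup.isOpenQuotientMap_mk.prodMap IsOpenQuotientMap.id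

theorem projCyl_add (z w : ℝ × ℝ) : projCyl (z + w) = projCyl z + projCyl w := rfl

theorem continuous_of_semiconj_projCyl {F : ℝ × ℝ → ℝ × ℝ} {f : Cyl → Cyl} (hF : Continuous F)
    (h : Semiconj projCyl F f) : Continuous f := by
  rw [isOpenQuotientMap_projCyl.isQuotientMap.continuous_iff, ← h.comp_eq]
  exact isOpenQuotientMap_projCyl.continuous.comp hF

theorem DehnLift.commute_add_vertical (L : DehnLift) {f : Cyl → Cyl}
    (h : Semiconj projCyl L.F f) : Function.Commute f (· + (0, 1)) := by
  intro z
  obtain ⟨⟨x, y⟩, rfl⟩ := isOpenQuotientMap_projCyl.surjective z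
  have hk : projCyl ((L.k : ℝ), 1) = (0, 1) :=
    Prod.ext ((AddCircle.coe_eq_zero_iff 1).2 ⟨L.k, by simp⟩) rfl
  have hvert : L.F ((x, y) + (0, 1)) = L.F (x, y) + ((L.k : ℝ), 1) := by
    simpa using L.vert x y
  calc f (projCyl (x, y) + (0, 1)) = f (projCyl ((x, y) + (0, 1))) := by simp [projCyl]
    _ = projCyl (L.F (x, y)) + (0, 1) := by rw [← h, hvert, projCyl_add, hk]
    _ = f (projCyl (x, y)) + (0, 1) := by rw [h]

section VerticalDisplacement

variable {f : Cyl → Cyl}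

def vertDisp (f : Cyl → Cyl) (n : ℕ) (z : Cyl) : ℝ := (f^[n] z).2 - z.2

theorem vertDisp_add (f : Cyl → Cyl) (m n : ℕ) (z : Cyl) :
    vertDisp f (m + n) z = vertDisp f m (f^[n] z) + vertDisp f n z := by
  simp only [vertDisp, iterate_add_apply]
  ring

theorem continuous_vertDisp (hf : Continuous f) (n : ℕ) : Continuous (vertDisp f n) :=
  (continuous_snd.comp (hf.iterate n)).sub continuous_snd

theorem periodic_vertDisp (hf : Function.Commute f (· + (0, 1))) (n : ℕ)
    (θ : AddCircle (1 : ℝ)) : Periodic (fun y => vertDisp f n (θ, y)) 1 := fun y => by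
  have := (hf.iterate_left n (θ, y)).symm
  simp only [vertDisp] at this ⊢
  rw [show ((θ, y + 1) : Cyl) = (θ, y) + (0, 1) by simp, ← this]
  simp only [Prod.snd_add]
  ring

theorem range_vertDisp_eq_image (hf : Function.Commute f (· + (0, 1))) (n : ℕ) :
    range (vertDisp f n) = vertDisp f n '' (univ ×ˢ Icc 0 1) := by
  refine (image_subset_range _ _).antisymm' <| range_subset_iff.2 fun ⟨θ, y⟩ => ?_
  obtain ⟨y', hy', hyy'⟩ := (periodic_vertDisp hf n θ).exists_mem_Ico₀ one_pos y
  exact ⟨(θ, y'), ⟨mem_univ θ, Ico_subset_Icc_self hy'⟩, hyy'.symm⟩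

theorem range_vertDisp (hc : Continuous f) (hf : Function.Commute f (· + (0, 1))) (n : ℕ) :
    range (vertDisp f n) = Icc (⨅ z, vertDisp f n z) (⨆ z, vertDisp f n z) := by
  have h := eq_Icc_of_connected_compact
    ((isConnected_univ.prod (isConnected_Icc zero_le_one)).image _
      (continuous_vertDisp hc n).continuousOn)
    ((isCompact_univ.prod isCompact_Icc).image (continuous_vertDisp hc n))
  rwa [← range_vertDisp_eq_image hf n] at h

theorem rotSet_eq_iInter_closure_iUnion_Icc (hc : Continuous f)
    (hf : Function.Commute f (· + (0, 1))) :
    rotSet f = ⋂ i : ℕ, closure (⋃ n : ℕ, ⋃ _ : i + 1 ≤ n,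
      Icc ((⨅ z, vertDisp f n z) / n) ((⨆ z, vertDisp f n z) / n)) := by
  refine iInter_congr fun i => congrArg closure <| iUnion₂_congr fun n hn => ?_
  have hn' : (0 : ℝ) < (n : ℝ)⁻¹ := inv_pos.2 (Nat.cast_pos.2 (by omega))
  simp only [div_eq_mul_inv, ← image_mul_right_Icc' _ _ hn', ← range_vertDisp hc hf n]
  ext r
  simp [vertDisp, eq_comm]

end VerticalDisplacement

/-- The vertical rotation set `ρ_V(f̂)` is a nonempty compact
interval `[a, b]` of the real line. -/
theorem rotSet_is_nonempty_compact_interval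
    (L : DehnLift) (fhat : Cyl → Cyl)
    (hfhat : ∀ z : ℝ × ℝ, projCyl (L.F z) = fhat (projCyl z)) :
    ∃ a b : ℝ, a ≤ b ∧ rotSet fhat = Set.Icc a b := by
  have hc : Continuous fhat := continuous_of_semiconj_projCyl L.F.continuous hfhat
  have hf : Function.Commute fhat (· + (0, 1)) := L.commute_add_vertical hfhat
  have hrange := range_vertDisp hc hf
  obtain ⟨a, b, hab, hl, hu, hla, hbu⟩ := exists_tendsto_div_of_subadditive
    (subadditive_iSup_of_cocycle (vertDisp_add fhat) fun n => hrange n ▸ bddAbove_Icc)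
    (subadditive_neg_iInf_of_cocycle (vertDisp_add fhat) fun n => hrange n ▸ bddBelow_Icc)
    fun n => nonempty_Icc.1 (hrange n ▸ range_nonempty _)
  exact ⟨a, b, hab, (rotSet_eq_iInter_closure_iUnion_Icc hc hf).trans
    (iInter_closure_iUnion_Icc_eq hl hu hla hbu)⟩
end
end
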